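/- Let P be a compact hypercube in ℝ^m and let K : P × P → [0,∞) be a kernel with bandwidth h > 0 satisfying: (a) ∫_P K(x,y) dy = 1 for every x ∈ P; (b) K(x,y) = 0 whenever ‖x−y‖ > h; (c) for every x ∈ P the map y ↦ K(x,y) is Lipschitz with constant L; (d) for every y the map x ↦ K(x,y) is continuously differentiable and for every x and every i ∈ {1,…,m} the map y ↦ ∂K/∂x_i(x,y) is Lipschitz with constant L′. Let ξ be a probability measure on P whose density ρ is continuously differentiable with each partial derivative ∂_iρ Lipschitz, and suppose the integration-by-parts identity ∫_P ∂_{x_i}K(x,y) ρ(y) dy = ∫_P K(x,y) ∂_iρ(y) dy holds for every x ∈ P and every i. Let ν̂ be any probability measure on P and set p̃(x) = ∫_P K(x,y) dν̂(y). Then for every x in the interior of P, ‖∇p̃(x) − ∇ρ(x)‖ ≤ m · L′ · W₁(ν̂, ξ) + m · h · ‖∇ρ‖_Lip, where ‖∇ρ‖_Lip = max_i ‖∂_iρ‖_Lip. -/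

import Mathlib

open MeasureTheory

/-- Kantorovich–Rubinstein (Wasserstein-1) distance: infimum over couplings of
`∫ dist x y dπ`. -/
noncomputable def W1 {X : Type*} [MeasurableSpace X] [PseudoMetricSpace X]
    (μ ν : Measure X) : ℝ :=
  sInf {r : ℝ | ∃ π : Measure (X × X),
    π.map Prod.fst = μ ∧ π.map Prod.snd = ν ∧ r = ∫ p, dist p.1 p.2 ∂π}

/-!
Differentiating under the integral sign gives `∂ᵢp̃(x) = ∫ ∂ₓᵢK(x,y) dν̂(y)`. Since
`y ↦ ∂ₓᵢK(x,y)` is `L'`-Lipschitz, integrating its Lipschitz bound against any coupling of `ν̂`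
and `ξ` replaces `ν̂` by `ξ` at cost `L'·W₁(ν̂,ξ)`. Integration by parts turns
`∫ ∂ₓᵢK(x,y) dξ(y)` into `∫ K(x,y) ∂ᵢρ(y) dy`, a `K(x,·)`-average of `∂ᵢρ` over the ball of
radius `h` around `x`, hence within `h·‖∂ᵢρ‖_Lip` of `∂ᵢρ(x)`. A bound on the `m` coordinates
bounds the operator norm up to a factor `m`.
-/

open Set Filter Metric Bornology Topology
open scoped NNReal

namespace EuclideanSpace

theorem isCompact_box {ι : Type*} [Finite ι] (a b : ι → ℝ) :
    IsCompact {x : EuclideanSpace ℝ ι | ∀ i, a i ≤ x i ∧ x i ≤ b i} := by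
  have hbox : {x : EuclideanSpace ℝ ι | ∀ i, a i ≤ x i ∧ x i ≤ b i} =
      EuclideanSpace.equiv ι ℝ ⁻¹' Icc a b := by
    ext x
    simp [Pi.le_def, forall_and]
  rw [hbox]
  exact (EuclideanSpace.equiv ι ℝ).toHomeomorph.isCompact_preimage.2 isCompact_Icc

variable {ι : Type*} [Fintype ι] [DecidableEq ι]

theorem opNorm_le_card_mul {F : Type*} [SeminormedAddCommGroup F] [NormedSpace ℝ F]
    {T : EuclideanSpace ℝ ι →L[ℝ] F} {C : ℝ} (hT : ∀ i, ‖T (single i 1)‖ ≤ C) :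
    ‖T‖ ≤ Fintype.card ι * C := by
  cases isEmpty_or_nonempty ι with
  | inl _ => simp [Subsingleton.elim T 0]
  | inr hι =>
    have hC : 0 ≤ C := (norm_nonneg _).trans (hT hι.some)
    refine T.opNorm_le_bound (by positivity) fun v => ?_
    calc ‖T v‖ = ‖∑ i, v i • T (single i 1)‖ := by
          conv_lhs => rw [← (EuclideanSpace.basisFun ι ℝ).sum_repr v]
          simp [map_sum]
      _ ≤ ∑ i, ‖v i‖ * ‖T (single i 1)‖ := (norm_sum_le _ _).trans_eq (by simp [norm_smul])
      _ ≤ ∑ _i : ι, ‖v‖ * C := by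
          gcongr with i
          · exact PiLp.norm_apply_le v i
          · exact hT i
      _ = Fintype.card ι * C * ‖v‖ := by
          simp only [Finset.sum_const, Finset.card_univ, nsmul_eq_mul]; ring

theorem lipschitzOnWith_of_apply_single {X F : Type*} [PseudoMetricSpace X]
    [SeminormedAddCommGroup F] [NormedSpace ℝ F] {T : X → EuclideanSpace ℝ ι →L[ℝ] F}
    {s : Set X} {L : ℝ≥0} (hT : ∀ i, LipschitzOnWith L (fun y => T y (single i 1)) s) :
    LipschitzOnWith (Fintype.card ι * L) T s := by
  refine LipschitzOnWith.of_dist_le_mul fun y hy z hz => ?_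
  rw [dist_eq_norm, NNReal.coe_mul, NNReal.coe_natCast, mul_assoc]
  refine opNorm_le_card_mul fun i => ?_
  simpa [dist_eq_norm] using (hT i).dist_le_mul y hy z hz

end EuclideanSpace

section Kantorovich

variable {X : Type*} [PseudoMetricSpace X] [MeasurableSpace X] [BorelSpace X]
  [SecondCountableTopology X]

theorem LipschitzWith.abs_integral_sub_le_mul_integral_dist {π : Measure (X × X)}
    [IsFiniteMeasure π] {P : Set X} (hP : IsBounded P) (h₁ : ∀ᵐ p ∂π, p.1 ∈ P)
    (h₂ : ∀ᵐ p ∂π, p.2 ∈ P) {g : X → ℝ} {c : ℝ≥0} (hg : LipschitzWith c g) :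
    |∫ p, g p.1 ∂π - ∫ p, g p.2 ∂π| ≤ c * ∫ p, dist p.1 p.2 ∂π := by
  obtain ⟨C, hC⟩ := (hg.isBounded_image hP).exists_norm_le
  obtain ⟨D, hD⟩ := isBounded_iff.1 hP
  have hint₁ : Integrable (fun p => g p.1) π :=
    .of_bound (hg.continuous.comp continuous_fst).aestronglyMeasurable C
      (h₁.mono fun p hp => hC _ (mem_image_of_mem g hp))
  have hint₂ : Integrable (fun p => g p.2) π :=
    .of_bound (hg.continuous.comp continuous_snd).aestronglyMeasurable C
      (h₂.mono fun p hp => hC _ (mem_image_of_mem g hp))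
  have hint_dist : Integrable (fun p : X × X => dist p.1 p.2) π :=
    .of_bound (continuous_fst.dist continuous_snd).aestronglyMeasurable D
      (by filter_upwards [h₁, h₂] with p hp₁ hp₂
          rw [Real.norm_of_nonneg dist_nonneg]
          exact hD hp₁ hp₂)
  rw [← integral_sub hint₁ hint₂, ← integral_const_mul]
  refine abs_integral_le_integral_abs.trans
    (integral_mono (hint₁.sub hint₂).abs (hint_dist.const_mul _) fun p => ?_)
  simpa [Real.dist_eq] using hg.dist_le_mul p.1 p.2

theorem LipschitzOnWith.abs_integral_sub_le_mul_W1 {μ ν : Measure X} [IsProbabilityMeasure μ]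
    [IsProbabilityMeasure ν] {P : Set X} (hP : IsBounded P) (hμ : ∀ᵐ y ∂μ, y ∈ P)
    (hν : ∀ᵐ y ∂ν, y ∈ P) {f : X → ℝ} {c : ℝ≥0} (hf : LipschitzOnWith c f P) :
    |∫ y, f y ∂μ - ∫ y, f y ∂ν| ≤ c * W1 μ ν := by
  obtain ⟨g, hg, hfg⟩ := hf.extend_real
  rw [integral_congr_ae (hμ.mono fun y hy => hfg hy),
    integral_congr_ae (hν.mono fun y hy => hfg hy), W1, ← smul_eq_mul,
    ← Real.sInf_smul_of_nonneg c.coe_nonneg]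
  refine le_csInf ⟨_, _, ⟨μ.prod ν, by simp, by simp, rfl⟩, rfl⟩ ?_
  rintro _ ⟨_, ⟨π, rfl, rfl, rfl⟩, rfl⟩
  have : IsProbabilityMeasure π := Measure.isProbabilityMeasure_of_map Prod.fst
  rw [integral_map measurable_fst.aemeasurable hg.continuous.aestronglyMeasurable,
    integral_map measurable_snd.aemeasurable hg.continuous.aestronglyMeasurable]
  exact hg.abs_integral_sub_le_mul_integral_dist hP
    (ae_of_ae_map measurable_fst.aemeasurable hμ) (ae_of_ae_map measurable_snd.aemeasurable hν)

end Kantorovich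

theorem abs_setIntegral_mul_sub_le {X : Type*} [PseudoMetricSpace X] [MeasurableSpace X]
    {μ : Measure X} {P : Set X} (hPm : MeasurableSet P) {k g : X → ℝ} {x : X} (hx : x ∈ P)
    {h : ℝ} {Lg : ℝ≥0} (hk_nonneg : ∀ y ∈ P, 0 ≤ k y) (hk_one : ∫ y in P, k y ∂μ = 1)
    (hk_supp : ∀ y ∈ P, h < dist x y → k y = 0) (hg : LipschitzOnWith Lg g P)
    (hkg : IntegrableOn (fun y => k y * g y) P μ) :
    |∫ y in P, k y * g y ∂μ - g x| ≤ h * Lg := by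
  have hk : IntegrableOn k P μ := .of_integral_ne_zero (by rw [hk_one]; exact one_ne_zero)
  have hkg' : IntegrableOn (fun y => k y * (g y - g x)) P μ := by
    simp_rw [mul_sub]
    exact hkg.sub (hk.mul_const (g x))
  calc |∫ y in P, k y * g y ∂μ - g x| = |∫ y in P, k y * (g y - g x) ∂μ| := by
        simp only [mul_sub]
        rw [integral_sub hkg (hk.mul_const _), integral_mul_const, hk_one, one_mul]
    _ ≤ ∫ y in P, k y * (h * Lg) ∂μ := by
        refine abs_integral_le_integral_abs.trans
          (setIntegral_mono_on hkg'.abs (hk.mul_const _) hPm fun y hy => ?_)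
        rw [abs_mul, abs_of_nonneg (hk_nonneg y hy)]
        by_cases hxy : h < dist x y
        · simp [hk_supp y hy hxy]
        · refine mul_le_mul_of_nonneg_left ?_ (hk_nonneg y hy)
          calc |g y - g x| ≤ Lg * dist y x := by
                simpa [Real.dist_eq] using hg.dist_le_mul y hy x hx
            _ ≤ h * Lg := by rw [dist_comm, mul_comm]; gcongr; exact not_lt.1 hxy
    _ = h * Lg := by rw [integral_mul_const, hk_one, one_mul]

theorem integral_withDensity_ofReal {X : Type*} [MeasurableSpace X] {μ : Measure X}
    {ρ : X → ℝ} (hρm : AEMeasurable ρ μ) (hρ : ∀ᵐ y ∂μ, 0 ≤ ρ y) (f : X → ℝ) :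
    ∫ y, f y ∂μ.withDensity (fun y => ENNReal.ofReal (ρ y)) = ∫ y, f y * ρ y ∂μ := by
  rw [integral_withDensity_eq_integral_toReal_smul₀ hρm.ennreal_ofReal
    (ae_of_all _ fun _ => ENNReal.ofReal_lt_top)]
  refine integral_congr_ae (hρ.mono fun y hy => ?_)
  simp [ENNReal.toReal_ofReal hy, mul_comm]

theorem exists_eventually_norm_le_of_lipschitzOnWith {T X G : Type*} [TopologicalSpace T]
    [PseudoMetricSpace X] [SeminormedAddCommGroup G] {F : T → X → G} {P : Set X}
    (hP : IsBounded P) {x : T} {y₀ : X} (hy₀ : y₀ ∈ P) {L : ℝ≥0}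
    (hF : ∀ᶠ x' in 𝓝 x, LipschitzOnWith L (F x') P) (hcont : ContinuousAt (F · y₀) x) :
    ∃ C, ∀ᶠ x' in 𝓝 x, ∀ y ∈ P, ‖F x' y‖ ≤ C := by
  obtain ⟨D, hD⟩ := isBounded_iff.1 hP
  refine ⟨‖F x y₀‖ + 1 + L * D, ?_⟩
  filter_upwards [hF, hcont.norm.eventually (eventually_le_nhds (lt_add_one _))]
    with x' hLip hnear y hy
  calc ‖F x' y‖ ≤ ‖F x' y₀‖ + dist (F x' y) (F x' y₀) := by
        rw [dist_eq_norm]; exact norm_le_norm_add_norm_sub' _ _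
    _ ≤ ‖F x y₀‖ + 1 + L * D := by
        gcongr
        exact (hLip.dist_le_mul y hy y₀ hy₀).trans (by gcongr; exact hD hy hy₀)

theorem hasFDerivAt_setIntegral_of_continuousOn {E X : Type*} [NormedAddCommGroup E]
    [NormedSpace ℝ E] [FiniteDimensional ℝ E] [MetricSpace X] [MeasurableSpace X]
    [BorelSpace X] {μ : Measure X} [IsFiniteMeasure μ] {P : Set X} (hP : IsCompact P)
    {F : E → X → ℝ} {F' : E → X → E →L[ℝ] ℝ} {x : E} {C : ℝ}
    (hF : ∀ᶠ x' in 𝓝 x, ContinuousOn (F x') P) (hF' : ContinuousOn (F' x) P)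
    (hF'_le : ∀ᶠ x' in 𝓝 x, ∀ y ∈ P, ‖F' x' y‖ ≤ C)
    (hderiv : ∀ᶠ x' in 𝓝 x, ∀ y ∈ P, HasFDerivAt (F · y) (F' x' y) x') :
    HasFDerivAt (fun x' => ∫ y in P, F x' y ∂μ) (∫ y in P, F' x y ∂μ) x :=
  hasFDerivAt_integral_of_dominated_of_fderiv_le (bound := fun _ => C) (hF'_le.and hderiv)
    (hF.mono fun _ h => h.aestronglyMeasurable hP.measurableSet)
    (hF.self_of_nhds.integrableOn_compact hP) (hF'.aestronglyMeasurable hP.measurableSet)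
    (ae_restrict_of_forall_mem hP.measurableSet fun y hy _ hx' => hx'.1 y hy)
    (integrable_const C)
    (ae_restrict_of_forall_mem hP.measurableSet fun y hy _ hx' => hx'.2 y hy)

theorem hasFDerivAt_setIntegral_kernel {ι : Type*} [Fintype ι] [DecidableEq ι]
    {μ : Measure (EuclideanSpace ℝ ι)} [IsFiniteMeasure μ] {P : Set (EuclideanSpace ℝ ι)}
    (hP : IsCompact P) {K : EuclideanSpace ℝ ι → EuclideanSpace ℝ ι → ℝ} {L L' : ℝ≥0}
    (hKLip : ∀ x ∈ P, LipschitzOnWith L (fun y => K x y) P)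
    (hKdiff : ∀ y ∈ P, ContDiffOn ℝ 1 (fun x => K x y) P)
    (hKLip' : ∀ x ∈ P, ∀ i, LipschitzOnWith L'
      (fun y => fderivWithin ℝ (fun x' => K x' y) P x (EuclideanSpace.single i 1)) P)
    {x : EuclideanSpace ℝ ι} (hx : x ∈ interior P) :
    IntegrableOn (fun y => fderivWithin ℝ (fun x' => K x' y) P x) P μ ∧
      HasFDerivAt (fun x' => ∫ y in P, K x' y ∂μ)
        (∫ y in P, fderivWithin ℝ (fun x' => K x' y) P x ∂μ) x := by
  have hPnhds : ∀ᶠ x' in 𝓝 x, P ∈ 𝓝 x' :=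
    (isOpen_interior.eventually_mem hx).mono fun _ => mem_interior_iff_mem_nhds.1
  have hxP : x ∈ P := interior_subset hx
  have hDLip : ∀ᶠ x' in 𝓝 x, LipschitzOnWith (Fintype.card ι * L')
      (fun y => fderivWithin ℝ (fun x' => K x' y) P x') P :=
    hPnhds.mono fun x' hx' => EuclideanSpace.lipschitzOnWith_of_apply_single
      (hKLip' x' (mem_of_mem_nhds hx'))
  have hD_cont : ContinuousAt (fun x' => fderivWithin ℝ (fun t => K t x) P x') x :=
    (((hKdiff x hxP).contDiffAt hPnhds.self_of_nhds).fderiv_right (m := 0) le_rfl).continuousAt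
      |>.congr (hPnhds.mono fun _ hx' => (fderivWithin_of_mem_nhds hx').symm)
  obtain ⟨C, hC⟩ := exists_eventually_norm_le_of_lipschitzOnWith hP.isBounded hxP hDLip hD_cont
  refine ⟨hDLip.self_of_nhds.continuousOn.integrableOn_compact hP,
    hasFDerivAt_setIntegral_of_continuousOn hP
      (hPnhds.mono fun x' hx' => (hKLip x' (mem_of_mem_nhds hx')).continuousOn)
      hDLip.self_of_nhds.continuousOn hC (hPnhds.mono fun x' hx' y hy => ?_)⟩
  rw [fderivWithin_of_mem_nhds hx']
  exact (((hKdiff y hy).differentiableOn one_ne_zero x' (mem_of_mem_nhds hx')).differentiableAt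
    hx').hasFDerivAt

theorem stmt_6_general {m : ℕ} (a b : Fin m → ℝ)
    (P : Set (EuclideanSpace ℝ (Fin m)))
    (hP : P = {x : EuclideanSpace ℝ (Fin m) | ∀ i, a i ≤ x i ∧ x i ≤ b i})
    (h : ℝ)
    (K : EuclideanSpace ℝ (Fin m) → EuclideanSpace ℝ (Fin m) → ℝ)
    (hKnonneg : ∀ x ∈ P, ∀ y ∈ P, 0 ≤ K x y)
    (hKint : ∀ x ∈ P, ∫ y in P, K x y ∂volume = 1)
    (hKsupp : ∀ x ∈ P, ∀ y ∈ P, h < dist x y → K x y = 0)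
    (L : NNReal) (hKLip : ∀ x ∈ P, LipschitzOnWith L (fun y => K x y) P)
    (hKdiff : ∀ y ∈ P, ContDiffOn ℝ 1 (fun x => K x y) P)
    (L' : NNReal)
    (hKLip' : ∀ x ∈ P, ∀ i : Fin m, LipschitzOnWith L'
      (fun y => fderivWithin ℝ (fun x' => K x' y) P x (EuclideanSpace.single i 1)) P)
    (ρ : EuclideanSpace ℝ (Fin m) → ℝ) (hρnonneg : ∀ x ∈ P, 0 ≤ ρ x)
    (hρdiff : ContDiffOn ℝ 1 ρ P)
    (Lρ' : NNReal)
    (hρLip' : ∀ i : Fin m, LipschitzOnWith Lρ'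
      (fun y => fderivWithin ℝ ρ P y (EuclideanSpace.single i 1)) P)
    (hIBP : ∀ x ∈ P, ∀ i : Fin m,
      ∫ y in P, (fderivWithin ℝ (fun x' => K x' y) P x (EuclideanSpace.single i 1)) * ρ y
          ∂volume
        = ∫ y in P, K x y * fderivWithin ℝ ρ P y (EuclideanSpace.single i 1) ∂volume)
    (ξ : Measure (EuclideanSpace ℝ (Fin m))) [IsProbabilityMeasure ξ]
    (hξ : ξ = (volume.restrict P).withDensity (fun x => ENNReal.ofReal (ρ x)))
    (νhat : Measure (EuclideanSpace ℝ (Fin m))) [IsProbabilityMeasure νhat]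
    (hνhat : νhat Pᶜ = 0) :
    ∀ x ∈ interior P,
      ‖fderivWithin ℝ (fun x' => ∫ y in P, K x' y ∂νhat) P x - fderivWithin ℝ ρ P x‖ ≤
        (m : ℝ) * (L' : ℝ) * W1 νhat ξ + (m : ℝ) * h * (Lρ' : ℝ) := by
  intro x hx
  have hxP : x ∈ P := interior_subset hx
  have hPc : IsCompact P := hP ▸ EuclideanSpace.isCompact_box a b
  have hPm : MeasurableSet P := hPc.measurableSet
  have hνP : ∀ᵐ y ∂νhat, y ∈ P := ae_iff.2 hνhat
  have hξP : ∀ᵐ y ∂ξ, y ∈ P :=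
    hξ ▸ (withDensity_absolutelyContinuous _ _).ae_le (ae_restrict_mem hPm)
  obtain ⟨hD_int, hderiv⟩ := hasFDerivAt_setIntegral_kernel (μ := νhat) hPc hKLip hKdiff hKLip' hx
  have hpartial : ∀ i, ‖(∫ y in P, fderivWithin ℝ (fun x' => K x' y) P x ∂νhat -
      fderivWithin ℝ ρ P x) (EuclideanSpace.single i 1)‖ ≤ L' * W1 νhat ξ + h * Lρ' := by
    intro i
    set f := fun y => fderivWithin ℝ (fun x' => K x' y) P x (EuclideanSpace.single i 1)
    set g := fun y => fderivWithin ℝ ρ P y (EuclideanSpace.single i 1)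
    have hfξ : ∫ y, f y ∂ξ = ∫ y in P, K x y * g y ∂volume := by
      rw [hξ, integral_withDensity_ofReal (hρdiff.continuousOn.aemeasurable hPm)
        ((ae_restrict_iff' hPm).2 (ae_of_all _ hρnonneg)), hIBP x hxP i]
    have hKg_int : IntegrableOn (fun y => K x y * g y) P :=
      ((hKLip x hxP).continuousOn.mul (hρLip' i).continuousOn).integrableOn_compact hPc
    have hsmooth : |∫ y in P, K x y * g y ∂volume - g x| ≤ h * Lρ' :=
      abs_setIntegral_mul_sub_le hPm hxP (hKnonneg x hxP) (hKint x hxP) (hKsupp x hxP)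
        (hρLip' i) hKg_int
    have hKR : |∫ y, f y ∂νhat - ∫ y, f y ∂ξ| ≤ L' * W1 νhat ξ :=
      (hKLip' x hxP i).abs_integral_sub_le_mul_W1 hPc.isBounded hνP hξP
    rw [sub_apply, ContinuousLinearMap.integral_apply hD_int,
      Measure.restrict_eq_self_of_ae_mem hνP, Real.norm_eq_abs]
    calc |∫ y, f y ∂νhat - g x| ≤ |∫ y, f y ∂νhat - ∫ y, f y ∂ξ| + |∫ y, f y ∂ξ - g x| :=
          abs_sub_le _ _ _
      _ ≤ L' * W1 νhat ξ + h * Lρ' := add_le_add hKR (hfξ ▸ hsmooth)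
  rw [fderivWithin_of_mem_nhds (mem_interior_iff_mem_nhds.1 hx), hderiv.fderiv]
  calc _ ≤ Fintype.card (Fin m) * (L' * W1 νhat ξ + h * Lρ') :=
        EuclideanSpace.opNorm_le_card_mul hpartial
    _ = _ := by rw [Fintype.card_fin]; ring

/-- gradient bound for the smoothed density: for every interior `x`,
`‖∇p̃(x) − ∇ρ(x)‖ ≤ m·L′·W₁(ν̂, ξ) + m·h·‖∇ρ‖_Lip`. Partial derivatives are expressed
via `fderivWithin` evaluated at the coordinate directions `EuclideanSpace.single i 1`. -/
theorem stmt_6 {m : ℕ} (a b : Fin m → ℝ) (hab : ∀ i, a i ≤ b i)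
    (P : Set (EuclideanSpace ℝ (Fin m)))
    (hP : P = {x : EuclideanSpace ℝ (Fin m) | ∀ i, a i ≤ x i ∧ x i ≤ b i})
    (h : ℝ) (hh : 0 < h)
    (K : EuclideanSpace ℝ (Fin m) → EuclideanSpace ℝ (Fin m) → ℝ)
    (hKnonneg : ∀ x ∈ P, ∀ y ∈ P, 0 ≤ K x y)
    (hKint : ∀ x ∈ P, ∫ y in P, K x y ∂volume = 1)
    (hKsupp : ∀ x ∈ P, ∀ y ∈ P, h < dist x y → K x y = 0)
    (L : NNReal) (hKLip : ∀ x ∈ P, LipschitzOnWith L (fun y => K x y) P)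
    (hKdiff : ∀ y ∈ P, ContDiffOn ℝ 1 (fun x => K x y) P)
    (L' : NNReal)
    (hKLip' : ∀ x ∈ P, ∀ i : Fin m, LipschitzOnWith L'
      (fun y => fderivWithin ℝ (fun x' => K x' y) P x (EuclideanSpace.single i 1)) P)
    (ρ : EuclideanSpace ℝ (Fin m) → ℝ) (hρnonneg : ∀ x ∈ P, 0 ≤ ρ x)
    (hρdiff : ContDiffOn ℝ 1 ρ P)
    (Lρ' : NNReal)
    (hρLip' : ∀ i : Fin m, LipschitzOnWith Lρ'
      (fun y => fderivWithin ℝ ρ P y (EuclideanSpace.single i 1)) P)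
    (hIBP : ∀ x ∈ P, ∀ i : Fin m,
      ∫ y in P, (fderivWithin ℝ (fun x' => K x' y) P x (EuclideanSpace.single i 1)) * ρ y
          ∂volume
        = ∫ y in P, K x y * fderivWithin ℝ ρ P y (EuclideanSpace.single i 1) ∂volume)
    (ξ : Measure (EuclideanSpace ℝ (Fin m))) [IsProbabilityMeasure ξ]
    (hξ : ξ = (volume.restrict P).withDensity (fun x => ENNReal.ofReal (ρ x)))
    (νhat : Measure (EuclideanSpace ℝ (Fin m))) [IsProbabilityMeasure νhat]
    (hνhat : νhat Pᶜ = 0) :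
    ∀ x ∈ interior P,
      ‖fderivWithin ℝ (fun x' => ∫ y in P, K x' y ∂νhat) P x - fderivWithin ℝ ρ P x‖ ≤
        (m : ℝ) * (L' : ℝ) * W1 νhat ξ + (m : ℝ) * h * (Lρ' : ℝ) :=
  stmt_6_general a b P hP h K hKnonneg hKint hKsupp L hKLip hKdiff L' hKLip' ρ hρnonneg hρdiff Lρ'
    hρLip' hIBP ξ hξ νhat hνhat
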